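/- arXiv:1411.3618 — 3 statements merged into one kernel-verified Lean document; each statement's English description precedes it below -/
import Mathlib

section
/- Suppose φ satisfies the Kolmogorov forward equation (KFE) on Ω for all t > 0, together with the diagonal boundary condition (DBC) and the corner condition φ(S₀,S₀,t) = 0. Then for all 0 < K < B with B > S₀ and all T > 0, the up-and-out call price C satisfies the forward equation ∂²C/∂B∂T (K,B,T) + (r(T) − q(T)) K ∂²C/∂K∂B (K,B,T) = ½ σ²(K,B,T) K² ∂³C/∂K²∂B (K,B,T) − q(T) ∂C/∂B (K,B,T) − ½ d/dB [ (B − K) B² σ²(B,B,T) (∂³C/∂K²∂B)(K,B,T)|_{K=B} ]. -/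
open MeasureTheory Real Filter

/-- Discount factor `D(T) = exp(-∫₀ᵀ r(u) du)`. -/
noncomputable def disc (r : ℝ → ℝ) (T : ℝ) : ℝ := Real.exp (-(∫ u in (0:ℝ)..T, r u))

/-- Up-and-out call price
`C(K,B,T) = D(T) ∫_{max(K,S₀)}^B ∫_K^y (x-K) φ(x,y,T) dx dy`. -/
noncomputable def upOutCall (S₀ : ℝ) (r : ℝ → ℝ) (φ : ℝ → ℝ → ℝ → ℝ) (K B T : ℝ) : ℝ :=
  disc r T * ∫ y in (max K S₀)..B, ∫ x in K..y, (x - K) * φ x y T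

/-!
Differentiating `C` under the integral sign gives `∂_B C = D ∫_K^B (x - K) φ(x,B,T) dx`,
`∂_K ∂_B C = -D ∫_K^B φ(x,B,T) dx` and `∂²_K ∂_B C = D φ(K,B,T)`; the moving lower limit
`max(K,S₀)` contributes nothing because the inner integrals vanish on the diagonal `y = K`.
In `∂_T ∂_B C` the KFE replaces `∂_t φ`, and two integrations by parts in `x` leave boundary terms
at `x = B`, which the diagonal boundary condition turns into the last term of the equation.

The delicate point is that `σ` is only separately differentiable, so the differentiability of
`b ↦ σ(b,b)² b² φ(b,b)` has to come from the KFE: below the diagonal `∂ₓ²(σ² x² φ)` is a jointly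
`C¹` function, and Taylor's formula in `x` from a base line `x = x₀ < S₀` writes `σ² x² φ` in terms
of quantities that are differentiable in both variables.
-/

open Set Interval

namespace intervalIntegral

variable {F F' : ℝ → ℝ → ℝ} {a b s₀ : ℝ}

theorem hasDerivAt_integral_of_continuous_deriv (hF : Continuous ↿F) (hF' : Continuous ↿F')
    (hd : ∀ s u, HasDerivAt (F · u) (F' s u) s) :
    HasDerivAt (fun s => ∫ u in a..b, F s u) (∫ u in a..b, F' s₀ u) s₀ := by
  obtain ⟨M, hM⟩ := ((isCompact_closedBall s₀ 1).prod
    (isCompact_uIcc (a := a) (b := b))).exists_bound_of_continuousOn hF'.continuousOn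
  refine (hasDerivAt_integral_of_dominated_loc_of_deriv_le (bound := fun _ => M)
    (Metric.closedBall_mem_nhds s₀ one_pos)
    (.of_forall fun s => (hF.uncurry_left s).aestronglyMeasurable)
    ((hF.uncurry_left s₀).intervalIntegrable _ _) (hF'.uncurry_left s₀).aestronglyMeasurable
    (.of_forall fun u hu s hs => hM (s, u) ⟨hs, uIoc_subset_uIcc hu⟩) intervalIntegrable_const
    (.of_forall fun u _ s _ => hd s u)).2

theorem hasDerivAt_integral_upper_param (hF : Continuous ↿F) (hF' : Continuous ↿F')
    (hd : ∀ s u, HasDerivAt (F · u) (F' s u) s) :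
    HasDerivAt (fun s => ∫ u in a..s, F s u) (F s₀ s₀ + ∫ u in a..s₀, F' s₀ u) s₀ := by
  have hsplit : (fun s => ∫ u in a..s, F s u)
      = fun s => (∫ u in s₀..s, F s u) + ∫ u in a..s₀, F s u := by
    funext s
    rw [add_comm, integral_add_adjacent_intervals ((hF.uncurry_left s).intervalIntegrable _ _)
      ((hF.uncurry_left s).intervalIntegrable _ _)]
  rw [hsplit]
  refine HasDerivAt.add ?_ (hasDerivAt_integral_of_continuous_deriv hF hF' hd)
  rw [hasDerivAt_iff_isLittleO, Asymptotics.isLittleO_iff]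
  intro ε hε
  obtain ⟨δ, hδ, hball⟩ := Metric.continuousAt_iff.1 (hF.continuousAt (x := (s₀, s₀))) ε hε
  filter_upwards [Metric.ball_mem_nhds s₀ hδ] with s hs
  have hclose : ∀ u ∈ Ι s₀ s, ‖F s u - F s₀ s₀‖ ≤ ε := by
    intro u hu
    rw [Metric.mem_ball, Real.dist_eq] at hs
    have hu' : |u - s₀| < δ := (abs_sub_left_of_mem_uIcc (uIoc_subset_uIcc hu)).trans_lt hs
    exact (hball (x := (s, u)) (max_lt hs hu')).le
  calc ‖(∫ u in s₀..s, F s u) - (∫ u in s₀..s₀, F s₀ u) - (s - s₀) • F s₀ s₀‖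
      = ‖∫ u in s₀..s, (F s u - F s₀ s₀)‖ := by
        rw [integral_same, sub_zero, integral_sub ((hF.uncurry_left s).intervalIntegrable _ _)
          intervalIntegrable_const, integral_const]
    _ ≤ ε * |s - s₀| := norm_integral_le_of_norm_le_const hclose
    _ = ε * ‖s - s₀‖ := by rw [Real.norm_eq_abs]

theorem hasDerivAt_integral_lower_param (hF : Continuous ↿F) (hF' : Continuous ↿F')
    (hd : ∀ s u, HasDerivAt (F · u) (F' s u) s) :
    HasDerivAt (fun s => ∫ u in s..b, F s u) (-F s₀ s₀ + ∫ u in s₀..b, F' s₀ u) s₀ := by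
  refine ((hasDerivAt_integral_upper_param (a := b) hF hF' hd).neg.congr_of_eventuallyEq
    (.of_forall fun s => integral_symm _ _)).congr_deriv ?_
  rw [integral_symm s₀]
  ring

theorem hasDerivAt_integral_max_lower_param (hF : Continuous ↿F) (hF' : Continuous ↿F')
    (hd : ∀ s u, HasDerivAt (F · u) (F' s u) s) (hdiag : ∀ s, F s s = 0) :
    HasDerivAt (fun s => ∫ u in max s a..b, F s u) (∫ u in max s₀ a..b, F' s₀ u) s₀ := by
  have hint : ∀ s c d, IntervalIntegrable (F s) volume c d :=
    fun s _ _ => (hF.uncurry_left s).intervalIntegrable _ _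
  have hint' : ∀ c d, IntervalIntegrable (F' s₀) volume c d :=
    fun _ _ => (hF'.uncurry_left s₀).intervalIntegrable _ _
  have hupper : ∀ s₁, HasDerivAt (fun s => ∫ u in a..s, F s u) (∫ u in a..s₁, F' s₁ u) s₁ :=
    fun s₁ => by simpa [hdiag] using hasDerivAt_integral_upper_param (a := a) hF hF' hd
  have hcut : HasDerivAt (fun s => ∫ u in a..max s a, F s u) (∫ u in a..max s₀ a, F' s₀ u) s₀ := by
    rcases lt_trichotomy s₀ a with h | rfl | h
    · rw [max_eq_right h.le, integral_same]
      refine (hasDerivAt_const s₀ (0 : ℝ)).congr_of_eventuallyEq ?_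
      filter_upwards [Iio_mem_nhds h] with s hs
      rw [max_eq_right hs.le, integral_same]
    · rw [max_self, integral_same, ← hasDerivWithinAt_univ, ← Iic_union_Ici]
      refine HasDerivWithinAt.union ?_ ?_
      · refine (hasDerivWithinAt_const s₀ _ (0 : ℝ)).congr (fun s hs => ?_) ?_
        · rw [max_eq_right (mem_Iic.1 hs), integral_same]
        · rw [max_self, integral_same]
      · refine ((hupper s₀).hasDerivWithinAt.congr (fun s hs => ?_) ?_).congr_deriv integral_same
        · rw [max_eq_left (mem_Ici.1 hs)]
        · rw [max_self]
    · rw [max_eq_left h.le]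
      refine (hupper s₀).congr_of_eventuallyEq ?_
      filter_upwards [Ioi_mem_nhds h] with s hs
      rw [max_eq_left hs.le]
  have hsplit : ∀ (G : ℝ → ℝ) (s : ℝ), (∀ c d, IntervalIntegrable G volume c d) →
      ∫ u in max s a..b, G u = (∫ u in a..b, G u) - ∫ u in a..max s a, G u :=
    fun G s hG => (integral_interval_sub_left (hG _ _) (hG _ _)).symm
  rw [hsplit _ _ hint']
  exact ((hasDerivAt_integral_of_continuous_deriv hF hF' hd).sub hcut).congr_of_eventuallyEq
    (.of_forall fun s => hsplit _ _ (hint s))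

end intervalIntegral

theorem taylor_integral_remainder_two {f : ℝ → ℝ} (hf : ContDiff ℝ 2 f) (a b : ℝ) :
    f b = f a + (b - a) * deriv f a + ∫ u in a..b, (b - u) * deriv (deriv f) u := by
  have hf' : ContDiff ℝ 1 (deriv f) := hf.deriv' (n := 1)
  have hparts := intervalIntegral.integral_mul_deriv_eq_deriv_mul (a := a) (b := b)
    (fun x _ => (hasDerivAt_id x).const_sub b)
    (fun x _ => (hf'.differentiable one_ne_zero x).hasDerivAt)
    intervalIntegrable_const ((hf'.continuous_deriv le_rfl).intervalIntegrable _ _)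
  have hftc : ∫ u in a..b, deriv f u = f b - f a :=
    intervalIntegral.integral_deriv_eq_sub (fun x _ => hf.differentiable two_ne_zero x)
      ((hf.continuous_deriv one_le_two).intervalIntegrable _ _)
  simp only [id, neg_one_mul, intervalIntegral.integral_neg, hftc] at hparts
  rw [hparts]
  ring

theorem deriv_eq_of_eqOn {f g : ℝ → ℝ} {s : Set ℝ} {x g' : ℝ} (hs : UniqueDiffWithinAt ℝ s x)
    (hx : x ∈ s) (hf : DifferentiableAt ℝ f x) (hg : HasDerivAt g g' x) (hfg : EqOn f g s) :
    deriv f x = g' :=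
  hs.eq_deriv _ hf.hasDerivAt.hasDerivWithinAt (hg.hasDerivWithinAt.congr hfg (hfg hx))

theorem taylor_integral_remainder_two_of_eqOn {f w : ℝ → ℝ} {a c x : ℝ} (hac : a < c)
    (hf : ContDiff ℝ 2 f) (hw : Continuous w) (hfw : EqOn (deriv (deriv f)) w (Ioo a c))
    (hx : x ∈ Icc a c) : f x = f a + (x - a) * deriv f a + ∫ u in a..x, (x - u) * w u := by
  have hfw' : EqOn (deriv (deriv f)) w (Icc a c) := by
    rw [← closure_Ioo hac.ne]
    exact hfw.closure ((hf.deriv' (n := 1)).continuous_deriv le_rfl) hw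
  rw [taylor_integral_remainder_two hf a x]
  congr 1
  refine intervalIntegral.integral_congr fun u hu => ?_
  rw [uIcc_of_le hx.1] at hu
  rw [hfw' ⟨hu.1, hu.2.trans hx.2⟩]

theorem hasDerivAt_taylor_integral_remainder_two {w : ℝ → ℝ} (hw : Continuous w) (a c d x₀ : ℝ) :
    HasDerivAt (fun x => c + (x - a) * d + ∫ u in a..x, (x - u) * w u)
      (d + ∫ u in a..x₀, w u) x₀ := by
  have hint := intervalIntegral.hasDerivAt_integral_upper_param (a := a) (s₀ := x₀)
    (F := fun x u => (x - u) * w u) (F' := fun _ u => w u) (by fun_prop) (by fun_prop)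
    (fun x u => by simpa using ((hasDerivAt_id x).sub_const u).mul_const (w u))
  exact (((hasDerivAt_id' x₀).sub_const a).mul_const d).const_add c |>.add hint
    |>.congr_deriv (by simp)

-- By Taylor's formula, `∂ₓG(x₀, y)` is a difference quotient of `G(x₁, y)` and `G(x₀, y)` up to
-- an integral of `W`, hence differentiable in `y`.
theorem hasDerivAt_deriv_fst_of_deriv_deriv_eq {G W Wy : ℝ → ℝ → ℝ} {x₀ x₁ B : ℝ}
    (h₀₁ : x₀ < x₁) (h₁B : x₁ < B)
    (hGx : ∀ y, ContDiff ℝ 2 (G · y)) (hGy : ∀ x, Differentiable ℝ (G x))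
    (hW : Continuous ↿W) (hWy : Continuous ↿Wy) (hWd : ∀ u y, HasDerivAt (W u) (Wy u y) y)
    (hGxx : ∀ u y, x₀ < u → u < y → x₁ < y → deriv (deriv (G · y)) u = W u y) :
    HasDerivAt (fun y => deriv (G · y) x₀)
      ((deriv (G x₁) B - deriv (G x₀) B - ∫ u in x₀..x₁, (x₁ - u) * Wy u B) / (x₁ - x₀)) B := by
  have hint := intervalIntegral.hasDerivAt_integral_of_continuous_deriv (a := x₀) (b := x₁)
    (s₀ := B) (F := fun y u => (x₁ - u) * W u y) (F' := fun y u => (x₁ - u) * Wy u y)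
    ((continuous_const.sub continuous_snd).mul (hW.comp continuous_swap))
    ((continuous_const.sub continuous_snd).mul (hWy.comp continuous_swap))
    (fun y u => (hWd u y).const_mul _)
  refine ((((hGy x₁ B).hasDerivAt.sub (hGy x₀ B).hasDerivAt).sub hint).div_const _
    ).congr_of_eventuallyEq ?_
  filter_upwards [Ioi_mem_nhds h₁B] with y hy
  change _ = (G x₁ y - G x₀ y - ∫ u in x₀..x₁, (x₁ - u) * W u y) / (x₁ - x₀)
  rw [eq_div_iff (sub_pos.2 h₀₁).ne', taylor_integral_remainder_two_of_eqOn (h₀₁.trans hy) (hGx y)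
    (hW.uncurry_right y) (fun u hu => hGxx u y hu.1 hu.2 hy) ⟨h₀₁.le, hy.le⟩]
  ring

theorem hasDerivAt_diag_of_deriv_deriv_eq {G W : ℝ → ℝ → ℝ} {x₀ x₁ B : ℝ}
    (h₀₁ : x₀ < x₁) (h₁B : x₁ < B)
    (hGx : ∀ y, ContDiff ℝ 2 (G · y)) (hGy : ∀ x, Differentiable ℝ (G x))
    (hW : ContDiff ℝ 1 ↿W)
    (hGxx : ∀ u y, x₀ < u → u < y → x₁ < y → deriv (deriv (G · y)) u = W u y) :
    HasDerivAt (fun b => G b b) (deriv (G · B) B + deriv (G B) B) B := by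
  set Wy : ℝ → ℝ → ℝ := fun u y => fderiv ℝ ↿W (u, y) (0, 1)
  have cW : Continuous ↿W := hW.continuous
  have cWy : Continuous ↿Wy := (hW.continuous_fderiv one_ne_zero).clm_apply continuous_const
  have hWy : ∀ u y, HasDerivAt (W u) (Wy u y) y := fun u y =>
    (hW.differentiable one_ne_zero (u, y)).hasFDerivAt.comp_hasDerivAt y
      ((hasDerivAt_const y u).prodMk (hasDerivAt_id y))
  -- below the diagonal, `G` is determined by `W` and by `G`, `∂ₓG` along the line `x = x₀`
  have hrep : ∀ y, x₁ < y → ∀ x ∈ Icc x₀ y,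
      G x y = G x₀ y + (x - x₀) * deriv (G · y) x₀ + ∫ u in x₀..x, (x - u) * W u y :=
    fun y hy _ hx => taylor_integral_remainder_two_of_eqOn (h₀₁.trans hy) (hGx y)
      (cW.uncurry_right y) (fun u hu => hGxx u y hu.1 hu.2 hy) hx
  have hcd := hasDerivAt_deriv_fst_of_deriv_deriv_eq h₀₁ h₁B hGx hGy cW cWy hWy hGxx
  set c' := (deriv (G x₁) B - deriv (G x₀) B - ∫ u in x₀..x₁, (x₁ - u) * Wy u B) / (x₁ - x₀)
  have hx₀B : x₀ ≤ B := (h₀₁.trans h₁B).le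
  -- `hrep` only holds for `x ≤ y`, so both partials at `(B, B)` are read off one-sidedly
  have hGxB : deriv (G · B) B = deriv (G · B) x₀ + ∫ u in x₀..B, W u B :=
    deriv_eq_of_eqOn (uniqueDiffOn_Icc (h₀₁.trans h₁B) B ⟨hx₀B, le_rfl⟩) ⟨hx₀B, le_rfl⟩
      ((hGx B).differentiable two_ne_zero B)
      (hasDerivAt_taylor_integral_remainder_two (cW.uncurry_right B) _ _ _ B) (hrep B h₁B)
  have hGyB : deriv (G B) B
      = deriv (G x₀) B + (B - x₀) * c' + ∫ u in x₀..B, (B - u) * Wy u B := by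
    refine deriv_eq_of_eqOn ((uniqueDiffOn_Ici B) B self_mem_Ici) self_mem_Ici (hGy B B)
      (((hGy x₀ B).hasDerivAt.add (hcd.const_mul (B - x₀))).add
        (intervalIntegral.hasDerivAt_integral_of_continuous_deriv
          (F := fun y u => (B - u) * W u y) (F' := fun y u => (B - u) * Wy u y)
          ((continuous_const.sub continuous_snd).mul (cW.comp continuous_swap))
          ((continuous_const.sub continuous_snd).mul (cWy.comp continuous_swap))
          (fun y u => (hWy u y).const_mul _)))
      (fun y hy => hrep y (h₁B.trans_le hy) B ⟨hx₀B, hy⟩)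
  have hdiag := intervalIntegral.hasDerivAt_integral_upper_param (a := x₀) (s₀ := B)
    (F := fun s u => (s - u) * W u s) (F' := fun s u => W u s + (s - u) * Wy u s)
    ((continuous_fst.sub continuous_snd).mul (cW.comp continuous_swap))
    ((cW.comp continuous_swap).add
      ((continuous_fst.sub continuous_snd).mul (cWy.comp continuous_swap)))
    (fun s u => (((hasDerivAt_id' s).sub_const u).mul (hWy u s)).congr_deriv (by rw [one_mul]))
  refine ((((hGy x₀ B).hasDerivAt.add (((hasDerivAt_id B).sub_const x₀).mul hcd)).add hdiag
    ).congr_of_eventuallyEq ?_).congr_deriv ?_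
  · filter_upwards [Ioi_mem_nhds h₁B] with y hy
    exact hrep y hy y ⟨(h₀₁.trans hy).le, le_rfl⟩
  · have cWyB : Continuous (Wy · B) := cWy.comp (continuous_id.prodMk continuous_const)
    rw [hGxB, hGyB, intervalIntegral.integral_add (f := fun u => W u B)
      (g := fun u => (B - u) * Wy u B) ((cW.uncurry_right B).intervalIntegrable _ _)
      ((by fun_prop : Continuous fun u => (B - u) * Wy u B).intervalIntegrable _ _)]
    simp only [id, one_mul, sub_self, zero_mul]
    ring

namespace intervalIntegral

theorem continuous_parametric_intervalIntegral_of_continuous_limits {X : Type*}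
    [TopologicalSpace X] {f : X → ℝ → ℝ} (hf : Continuous ↿f) {a b : X → ℝ}
    (ha : Continuous a) (hb : Continuous b) : Continuous fun x => ∫ t in a x..b x, f x t := by
  have hsplit : (fun x => ∫ t in a x..b x, f x t)
      = fun x => (∫ t in (0 : ℝ)..b x, f x t) - ∫ t in (0 : ℝ)..a x, f x t :=
    funext fun x => (integral_interval_sub_left ((hf.uncurry_left x).intervalIntegrable _ _)
      ((hf.uncurry_left x).intervalIntegrable _ _)).symm
  rw [hsplit]
  exact (continuous_parametric_intervalIntegral_of_continuous hf hb).sub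
    (continuous_parametric_intervalIntegral_of_continuous hf ha)

end intervalIntegral

theorem hasDerivAt_fst_of_differentiableAt_uncurry {φ : ℝ → ℝ → ℝ → ℝ} {x y t : ℝ}
    (h : DifferentiableAt ℝ ↿φ (x, y, t)) :
    HasDerivAt (φ · y t) (fderiv ℝ ↿φ (x, y, t) (1, 0, 0)) x := by
  have := h.hasFDerivAt.comp_hasDerivAt x ((hasDerivAt_id x).prodMk (hasDerivAt_const x (y, t)))
  exact this

theorem hasDerivAt_thd_of_differentiableAt_uncurry {φ : ℝ → ℝ → ℝ → ℝ} {x y t : ℝ}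
    (h : DifferentiableAt ℝ ↿φ (x, y, t)) :
    HasDerivAt (φ x y) (fderiv ℝ ↿φ (x, y, t) (0, 0, 1)) t := by
  have := h.hasFDerivAt.comp_hasDerivAt t
    ((hasDerivAt_const t x).prodMk ((hasDerivAt_const t y).prodMk (hasDerivAt_id t)))
  exact this

theorem contDiff_uncurry_deriv_fst {φ : ℝ → ℝ → ℝ → ℝ} {n : WithTop ℕ∞}
    (hφ : ContDiff ℝ (n + 1) ↿φ) : ContDiff ℝ n ↿fun x y t => deriv (φ · y t) x := by
  have h : (↿fun x y t => deriv (φ · y t) x) = fun p => fderiv ℝ ↿φ p (1, 0, 0) := funext fun p =>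
    (hasDerivAt_fst_of_differentiableAt_uncurry
      (hφ.differentiable (by simp) (p.1, p.2.1, p.2.2))).deriv
  rw [h]
  exact (hφ.fderiv_right le_rfl).clm_apply contDiff_const

theorem contDiff_uncurry_deriv_thd {φ : ℝ → ℝ → ℝ → ℝ} {n : WithTop ℕ∞}
    (hφ : ContDiff ℝ (n + 1) ↿φ) : ContDiff ℝ n ↿fun x y t => deriv (φ x y) t := by
  have h : (↿fun x y t => deriv (φ x y) t) = fun p => fderiv ℝ ↿φ p (0, 0, 1) := funext fun p =>
    (hasDerivAt_thd_of_differentiableAt_uncurry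
      (hφ.differentiable (by simp) (p.1, p.2.1, p.2.2))).deriv
  rw [h]
  exact (hφ.fderiv_right le_rfl).clm_apply contDiff_const

theorem hasDerivAt_disc {r : ℝ → ℝ} (hr : Continuous r) (T : ℝ) :
    HasDerivAt (disc r) (-r T * disc r T) T := by
  unfold disc
  simpa [mul_comm] using ((hr.integral_hasStrictDerivAt 0 T).hasDerivAt.neg).exp

section UpOutCall

variable {S₀ : ℝ} {r : ℝ → ℝ} {φ : ℝ → ℝ → ℝ → ℝ}

theorem hasDerivAt_upOutCall_barrier (hφ : Continuous ↿φ) (K B T : ℝ) :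
    HasDerivAt (fun B => upOutCall S₀ r φ K B T)
      (disc r T * ∫ x in K..B, (x - K) * φ x B T) B := by
  have hA : Continuous fun y => ∫ x in K..y, (x - K) * φ x y T :=
    intervalIntegral.continuous_parametric_intervalIntegral_of_continuous
      (f := fun y x => (x - K) * φ x y T) (by fun_prop) continuous_id
  exact ((hA.integral_hasStrictDerivAt _ B).hasDerivAt).const_mul _

theorem hasDerivAt_upOutCall_strike (hφ : Continuous ↿φ) (K B T : ℝ) :
    HasDerivAt (fun K => upOutCall S₀ r φ K B T)
      (-disc r T * ∫ y in max K S₀..B, ∫ x in K..y, φ x y T) K := by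
  have hA : Continuous ↿fun k y => ∫ x in k..y, (x - k) * φ x y T :=
    intervalIntegral.continuous_parametric_intervalIntegral_of_continuous_limits
      (f := fun (p : ℝ × ℝ) x => (x - p.1) * φ x p.2 T) (by fun_prop) continuous_fst continuous_snd
  have hP : Continuous ↿fun k y => -∫ x in k..y, φ x y T :=
    (intervalIntegral.continuous_parametric_intervalIntegral_of_continuous_limits
      (f := fun (p : ℝ × ℝ) x => φ x p.2 T) (by fun_prop) continuous_fst continuous_snd).neg
  have hdA : ∀ k y, HasDerivAt (fun k => ∫ x in k..y, (x - k) * φ x y T)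
      (-∫ x in k..y, φ x y T) k := fun k y => by
    simpa using intervalIntegral.hasDerivAt_integral_lower_param (b := y) (s₀ := k)
      (F := fun k x => (x - k) * φ x y T) (F' := fun _ x => -φ x y T) (by fun_prop)
      (by fun_prop) fun k x => by
        simpa using ((hasDerivAt_const k x).sub (hasDerivAt_id k)).mul_const (φ x y T)
  have := (intervalIntegral.hasDerivAt_integral_max_lower_param (a := S₀) (b := B) (s₀ := K)
    hA hP hdA (fun k => intervalIntegral.integral_same)).const_mul (disc r T)
  unfold upOutCall
  simpa [intervalIntegral.integral_neg] using this

theorem deriv_deriv_upOutCall_strike (hφ : Continuous ↿φ) (K B T : ℝ) :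
    deriv (deriv fun K => upOutCall S₀ r φ K B T) K = disc r T * ∫ y in max K S₀..B, φ K y T := by
  have hP : Continuous ↿fun k y => ∫ x in k..y, φ x y T :=
    intervalIntegral.continuous_parametric_intervalIntegral_of_continuous_limits
      (f := fun (p : ℝ × ℝ) x => φ x p.2 T) (by fun_prop) continuous_fst continuous_snd
  have hdP : ∀ k y, HasDerivAt (fun k => ∫ x in k..y, φ x y T) (-φ k y T) k := fun k y =>
    have hc : Continuous (φ · y T) := by fun_prop
    intervalIntegral.integral_hasDerivAt_left (hc.intervalIntegrable _ _)
      (hc.stronglyMeasurableAtFilter _ _) hc.continuousAt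
  have hK : deriv (fun K => upOutCall S₀ r φ K B T)
      = fun k => -disc r T * ∫ y in max k S₀..B, ∫ x in k..y, φ x y T :=
    funext fun k => (hasDerivAt_upOutCall_strike hφ k B T).deriv
  rw [hK]
  have := (intervalIntegral.hasDerivAt_integral_max_lower_param (a := S₀) (b := B) (s₀ := K)
    hP (by fun_prop) hdP (fun k => intervalIntegral.integral_same)).const_mul (-disc r T)
  simpa [intervalIntegral.integral_neg] using this.deriv

theorem deriv_barrier_deriv_upOutCall_strike (hφ : Continuous ↿φ) (K B T : ℝ) :
    deriv (fun B => deriv (fun K => upOutCall S₀ r φ K B T) K) B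
      = -disc r T * ∫ x in K..B, φ x B T := by
  have hP : Continuous fun y => ∫ x in K..y, φ x y T :=
    intervalIntegral.continuous_parametric_intervalIntegral_of_continuous
      (f := fun y x => φ x y T) (by fun_prop) continuous_id
  rw [funext fun B => (hasDerivAt_upOutCall_strike hφ K B T).deriv]
  exact ((hP.integral_hasStrictDerivAt _ B).hasDerivAt.const_mul _).deriv

theorem deriv_barrier_deriv_deriv_upOutCall_strike (hφ : Continuous ↿φ) (K B T : ℝ) :
    deriv (fun B => deriv (deriv fun K => upOutCall S₀ r φ K B T) K) B = disc r T * φ K B T := by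
  rw [funext fun B => deriv_deriv_upOutCall_strike hφ K B T]
  have hφK : Continuous (φ K · T) := by fun_prop
  exact ((hφK.integral_hasStrictDerivAt _ B).hasDerivAt.const_mul _).deriv

theorem deriv_time_deriv_upOutCall_barrier (hr : Continuous r) (hφ : ContDiff ℝ 1 ↿φ)
    (K B T : ℝ) :
    deriv (fun T => deriv (fun B => upOutCall S₀ r φ K B T) B) T
      = -r T * disc r T * (∫ x in K..B, (x - K) * φ x B T)
        + disc r T * ∫ x in K..B, (x - K) * deriv (φ x B) T := by
  rw [funext fun T => (hasDerivAt_upOutCall_barrier hφ.continuous K B T).deriv]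
  have hφt : Continuous ↿fun x y t => deriv (φ x y) t :=
    (contDiff_uncurry_deriv_thd (n := 0) hφ).continuous
  have hJ := intervalIntegral.hasDerivAt_integral_of_continuous_deriv (a := K) (b := B) (s₀ := T)
    (F := fun t x => (x - K) * φ x B t) (F' := fun t x => (x - K) * deriv (φ x B) t)
    (by fun_prop)
    ((continuous_snd.sub continuous_const).mul
      (hφt.comp (continuous_snd.prodMk (continuous_const.prodMk continuous_fst))))
    fun t x => ((hasDerivAt_thd_of_differentiableAt_uncurry
      (hφ.differentiable one_ne_zero (x, B, t))).differentiableAt.hasDerivAt.const_mul (x - K))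
  exact ((hasDerivAt_disc hr T).mul hJ).deriv

end UpOutCall

theorem integral_sub_mul_deriv_deriv {g : ℝ → ℝ} (hg : ContDiff ℝ 2 g) (a b : ℝ) :
    ∫ x in a..b, (x - a) * deriv (deriv g) x = (b - a) * deriv g b - (g b - g a) := by
  have h := taylor_integral_remainder_two hg b a
  rw [intervalIntegral.integral_symm] at h
  have hneg : ∫ x in a..b, (x - a) * deriv (deriv g) x
      = -∫ x in a..b, (a - x) * deriv (deriv g) x := by
    rw [← intervalIntegral.integral_neg]
    exact intervalIntegral.integral_congr fun x _ => by ring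
  rw [hneg]
  linarith

theorem integral_sub_mul_eq_of_eqOn_Ioo {f g h : ℝ → ℝ} {a b c : ℝ} (hab : a ≤ b)
    (hf : ContDiff ℝ 1 f) (hg : ContDiff ℝ 2 g)
    (hh : EqOn h (fun x => (1 / 2) * deriv (deriv g) x - c * deriv (fun x => x * f x) x)
      (Ioo a b)) :
    ∫ x in a..b, (x - a) * h x
      = (1 / 2) * ((b - a) * deriv g b - (g b - g a))
        - c * ((b - a) * (b * f b) - ((∫ x in a..b, (x - a) * f x) + a * ∫ x in a..b, f x)) := by
  have hxf : ContDiff ℝ 1 fun x => x * f x := contDiff_id.mul hf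
  have hcongr : ∫ x in a..b, (x - a) * h x
      = (1 / 2) * (∫ x in a..b, (x - a) * deriv (deriv g) x)
        - c * ∫ x in a..b, (x - a) * deriv (fun x => x * f x) x := by
    have hint₁ : IntervalIntegrable (fun x => (x - a) * deriv (deriv g) x) volume a b :=
      (by fun_prop : Continuous fun x => x - a).mul
        ((hg.deriv' (n := 1)).continuous_deriv le_rfl) |>.intervalIntegrable _ _
    have hint₂ : IntervalIntegrable (fun x => (x - a) * deriv (fun x => x * f x) x) volume a b :=
      (by fun_prop : Continuous fun x => x - a).mul (hxf.continuous_deriv le_rfl)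
        |>.intervalIntegrable _ _
    rw [← intervalIntegral.integral_const_mul, ← intervalIntegral.integral_const_mul,
      ← intervalIntegral.integral_sub (hint₁.const_mul _) (hint₂.const_mul _),
      intervalIntegral.integral_of_le hab, intervalIntegral.integral_of_le hab,
      integral_Ioc_eq_integral_Ioo, integral_Ioc_eq_integral_Ioo]
    refine setIntegral_congr_fun measurableSet_Ioo fun x hx => ?_
    rw [hh hx]
    ring
  have hparts : ∫ x in a..b, (x - a) * deriv (fun x => x * f x) x
      = (b - a) * (b * f b) - (a - a) * (a * f a) - ∫ x in a..b, 1 * (x * f x) :=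
    intervalIntegral.integral_mul_deriv_eq_deriv_mul
      (fun x _ => (hasDerivAt_id' x).sub_const a)
      (fun x _ => (hxf.differentiable one_ne_zero x).hasDerivAt)
      intervalIntegrable_const ((hxf.continuous_deriv le_rfl).intervalIntegrable _ _)
  have hmoment : ∫ x in a..b, 1 * (x * f x)
      = (∫ x in a..b, (x - a) * f x) + a * ∫ x in a..b, f x := by
    rw [← intervalIntegral.integral_const_mul, ← intervalIntegral.integral_add
      ((by fun_prop : Continuous fun x => (x - a) * f x).intervalIntegrable _ _)
      ((by fun_prop : Continuous fun x => a * f x).intervalIntegrable _ _)]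
    exact intervalIntegral.integral_congr fun x _ => by ring
  rw [hcongr, integral_sub_mul_deriv_deriv hg, hparts, hmoment]
  ring

theorem hasDerivAt_diag_of_forward_eq {σ φ : ℝ → ℝ → ℝ → ℝ} {S₀ B T c : ℝ}
    (hS₀ : 0 < S₀) (hSB : S₀ < B)
    (hσx : ∀ y, ContDiff ℝ 2 fun x => σ x y T) (hσy : ∀ x, ContDiff ℝ 1 fun y => σ x y T)
    (hφ : ContDiff ℝ 2 ↿φ)
    (hKFE : ∀ x y, 0 < x → x < y → S₀ < y →
      deriv (fun t' => φ x y t') T + c * deriv (fun x' => x' * φ x' y T) x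
        - (1 / 2) * deriv (deriv (fun x' => (σ x' y T) ^ 2 * x' ^ 2 * φ x' y T)) x = 0) :
    HasDerivAt (fun b => (σ b b T) ^ 2 * b ^ 2 * φ b b T)
      (deriv (fun x => (σ x B T) ^ 2 * x ^ 2 * φ x B T) B
        + deriv (fun y => (σ B y T) ^ 2 * B ^ 2 * φ B y T) B) B := by
  have hφx : ContDiff ℝ 1 ↿fun x y t => deriv (φ · y t) x := contDiff_uncurry_deriv_fst hφ
  have hφt : ContDiff ℝ 1 ↿fun x y t => deriv (φ x y) t := contDiff_uncurry_deriv_thd hφ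
  have hslice : ∀ y, ContDiff ℝ 2 (φ · y T) := fun y =>
    hφ.comp (contDiff_id.prodMk (contDiff_const (c := (y, T))))
  refine hasDerivAt_diag_of_deriv_deriv_eq (x₀ := S₀ / 2) (x₁ := S₀)
    (G := fun x y => (σ x y T) ^ 2 * x ^ 2 * φ x y T)
    (W := fun u y => 2 * (deriv (φ u y) T + c * (φ u y T + u * deriv (φ · y T) u)))
    (by linarith) hSB (fun y => ((hσx y).pow 2).mul (contDiff_id.pow 2) |>.mul (hslice y))
    (fun x => (((hσy x).pow 2).mul contDiff_const).mul
      ((hφ.comp (contDiff_const.prodMk (contDiff_id.prodMk contDiff_const))).of_le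
        one_le_two) |>.differentiable one_ne_zero) ?_ fun u y hu _ hy => ?_
  · have hpt : ContDiff ℝ 1 fun p : ℝ × ℝ => (p.1, p.2, T) := by fun_prop
    exact contDiff_const.mul ((hφt.comp hpt).add (contDiff_const.mul
      (((hφ.of_le one_le_two).comp hpt).add (contDiff_fst.mul (hφx.comp hpt)))))
  · have hprod : deriv (fun x' => x' * φ x' y T) u = φ u y T + u * deriv (φ · y T) u :=
      (((hasDerivAt_id' u).mul ((hslice y).differentiable two_ne_zero u).hasDerivAt
        ).congr_deriv (by rw [one_mul])).deriv
    have := hKFE u y (by linarith) ‹_› hy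
    rw [hprod] at this
    linarith

theorem stmt_0_general (S₀ : ℝ) (hS₀ : 0 < S₀)
    (r q : ℝ → ℝ) (hr : Continuous r)
    (σ φ : ℝ → ℝ → ℝ → ℝ)
    -- regularity of σ: bounded, C² in x, C¹ in y, continuous in t
    (hσx : ∀ y t, ContDiff ℝ 2 fun x => σ x y t)
    (hσy : ∀ x t, ContDiff ℝ 1 fun y => σ x y t)
    -- regularity of φ: C² with bounded derivatives
    (hφ : ContDiff ℝ 2 fun p : ℝ × ℝ × ℝ => φ p.1 p.2.1 p.2.2)
    -- Kolmogorov forward equation on Ω, t > 0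
    (hKFE : ∀ x y t : ℝ, 0 < x → x < y → S₀ < y → 0 < t →
      deriv (fun t' => φ x y t') t
        + (r t - q t) * deriv (fun x' => x' * φ x' y t) x
        - (1/2) * deriv (deriv (fun x' => (σ x' y t)^2 * x'^2 * φ x' y t)) x = 0)
    -- diagonal boundary condition at x = y > S₀, t > 0
    (hDBC : ∀ y t : ℝ, S₀ < y → 0 < t →
      deriv (fun x' => (σ x' y t)^2 * x'^2 * φ x' y t) y
        + (1/2) * deriv (fun y' => (σ y y' t)^2 * y^2 * φ y y' t) y
        = (r t - q t) * y * φ y y t) :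
    ∀ K B T : ℝ, 0 < K → K < B → S₀ < B → 0 < T →
      deriv (fun T' => deriv (fun B' => upOutCall S₀ r φ K B' T') B) T
        + (r T - q T) * K * deriv (fun B' => deriv (fun K' => upOutCall S₀ r φ K' B' T) K) B
      = (1/2) * (σ K B T)^2 * K^2
            * deriv (fun B' => deriv (deriv (fun K' => upOutCall S₀ r φ K' B' T)) K) B
        - q T * deriv (fun B' => upOutCall S₀ r φ K B' T) B
        - (1/2) * deriv (fun b =>
            (b - K) * b^2 * (σ b b T)^2
              * deriv (fun B' => deriv (deriv (fun K' => upOutCall S₀ r φ K' B' T)) b) b) B := by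
  intro K B T hK hKB hSB hT
  have hφc : Continuous ↿φ := hφ.continuous
  have hdiag := hasDerivAt_diag_of_forward_eq hS₀ hSB (fun y => hσx y T) (fun x => hσy x T) hφ
    fun x y hx hxy hy => hKFE x y T hx hxy hy hT
  have hboundary :
      HasDerivAt (fun b => (b - K) * (disc r T * (σ b b T ^ 2 * b ^ 2 * φ b b T))) _ B :=
    ((hasDerivAt_id' B).sub_const K).mul (hdiag.const_mul (disc r T))
  have hslice : ContDiff ℝ 2 (φ · B T) :=
    hφ.comp (contDiff_id.prodMk (contDiff_const (c := (B, T))))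
  have hmoment := integral_sub_mul_eq_of_eqOn_Ioo (h := fun x => deriv (φ x B) T)
    (g := fun x => (σ x B T) ^ 2 * x ^ 2 * φ x B T) (c := r T - q T) hKB.le
    (hslice.of_le one_le_two)
    (((hσx B T).pow 2).mul (contDiff_id.pow 2) |>.mul hslice)
    fun x hx => by beta_reduce; linarith [hKFE x B T (hK.trans hx.1) hx.2 hSB hT]
  simp only [deriv_barrier_deriv_deriv_upOutCall_strike hφc]
  rw [deriv_time_deriv_upOutCall_barrier hr (hφ.of_le one_le_two),
    deriv_barrier_deriv_upOutCall_strike hφc, (hasDerivAt_upOutCall_barrier hφc K B T).deriv,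
    hmoment, show (fun b => (b - K) * b ^ 2 * σ b b T ^ 2 * (disc r T * φ b b T))
      = fun b => (b - K) * (disc r T * (σ b b T ^ 2 * b ^ 2 * φ b b T)) from
    funext fun b => by ring, hboundary.deriv]
  linear_combination disc r T * (B - K) * hDBC B T hSB hT

/-- Forward equation for up-and-out barrier call prices (Theorem 2.3 of the paper):
if the density `φ` satisfies the Kolmogorov forward equation on
`Ω = {(x,y) : 0 < x < y, S₀ < y}`, the diagonal boundary condition, and the
corner condition `φ(S₀,S₀,t) = 0`, then for all `0 < K < B`, `B > S₀`, `T > 0`,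
`∂²C/∂B∂T + (r-q) K ∂²C/∂K∂B
  = ½ σ²(K,B,T) K² ∂³C/∂K²∂B - q ∂C/∂B
    - ½ d/dB [ (B-K) B² σ²(B,B,T) (∂³C/∂K²∂B)|_{K=B} ]`. -/
theorem stmt_0 (S₀ : ℝ) (hS₀ : 0 < S₀)
    (r q : ℝ → ℝ) (hr : Continuous r) (hq : Continuous q)
    (σ φ : ℝ → ℝ → ℝ → ℝ)
    -- regularity of σ: bounded, C² in x, C¹ in y, continuous in t
    (hσbd : ∃ M : ℝ, ∀ x y t, |σ x y t| ≤ M)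
    (hσx : ∀ y t, ContDiff ℝ 2 fun x => σ x y t)
    (hσy : ∀ x t, ContDiff ℝ 1 fun y => σ x y t)
    (hσt : ∀ x y, Continuous fun t => σ x y t)
    -- regularity of φ: C² with bounded derivatives
    (hφ : ContDiff ℝ 2 fun p : ℝ × ℝ × ℝ => φ p.1 p.2.1 p.2.2)
    (hφbd : ∃ M : ℝ, ∀ p : ℝ × ℝ × ℝ,
      ‖fderiv ℝ (fun p : ℝ × ℝ × ℝ => φ p.1 p.2.1 p.2.2) p‖ ≤ M)
    -- Kolmogorov forward equation on Ω, t > 0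
    (hKFE : ∀ x y t : ℝ, 0 < x → x < y → S₀ < y → 0 < t →
      deriv (fun t' => φ x y t') t
        + (r t - q t) * deriv (fun x' => x' * φ x' y t) x
        - (1/2) * deriv (deriv (fun x' => (σ x' y t)^2 * x'^2 * φ x' y t)) x = 0)
    -- diagonal boundary condition at x = y > S₀, t > 0
    (hDBC : ∀ y t : ℝ, S₀ < y → 0 < t →
      deriv (fun x' => (σ x' y t)^2 * x'^2 * φ x' y t) y
        + (1/2) * deriv (fun y' => (σ y y' t)^2 * y^2 * φ y y' t) y
        = (r t - q t) * y * φ y y t)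
    -- corner condition
    (hcorner : ∀ t : ℝ, 0 < t → φ S₀ S₀ t = 0) :
    ∀ K B T : ℝ, 0 < K → K < B → S₀ < B → 0 < T →
      deriv (fun T' => deriv (fun B' => upOutCall S₀ r φ K B' T') B) T
        + (r T - q T) * K * deriv (fun B' => deriv (fun K' => upOutCall S₀ r φ K' B' T) K) B
      = (1/2) * (σ K B T)^2 * K^2
            * deriv (fun B' => deriv (deriv (fun K' => upOutCall S₀ r φ K' B' T)) K) B
        - q T * deriv (fun B' => upOutCall S₀ r φ K B' T) B
        - (1/2) * deriv (fun b =>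
            (b - K) * b^2 * (σ b b T)^2
              * deriv (fun B' => deriv (deriv (fun K' => upOutCall S₀ r φ K' B' T)) b) b) B :=
  stmt_0_general S₀ hS₀ r q hr σ φ hσx hσy hφ hKFE hDBC
end

section
/- For all 0 < K < B with B > S₀ and all T ≥ 0, the mixed second derivative of the up-and-out call price satisfies ∂²C/∂K∂B (K,B,T) = − D(T) ∫_K^B φ(x,B,T) dx. -/
/-!
With `G(k, y) = ∫_k^y (x - k) φ(x, y, T) dx` the price is `D(T) ∫_{max(K,S₀)}^B G(K, y) dy`.
Differentiating in `K`, the moving lower limit `max(K, S₀)` contributes nothing even though it is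
not differentiable at `K = S₀`: it is locally constant for `K < S₀`, and for `K ≥ S₀` it is
Lipschitz with `G(K, K) = 0`, so the boundary piece is `o(h)`.
Differentiating under the integral sign, with `∂ₖ G(k, y) = -∫_k^y φ(x, y, T) dx` because the
integrand of `G` vanishes at `x = k`, gives `∂C/∂K = D(T) ∫_{max(K,S₀)}^B ∂ₖ G(K, y) dy` for
every `B`; the fundamental theorem of calculus in `B` then gives the claim.
-/

open MeasureTheory Real Filter

open Function Set Topology NNReal intervalIntegral

section Parametric

variable {E : Type*} [NormedAddCommGroup E] [NormedSpace ℝ E]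

theorem continuous_intervalIntegral_of_continuous_uncurry {X : Type*} [TopologicalSpace X]
    {f : X → ℝ → E} (hf : Continuous (uncurry f)) {a b : X → ℝ} (ha : Continuous a)
    (hb : Continuous b) : Continuous fun x => ∫ t in a x..b x, f x t := by
  have primitive := fun (s : X → ℝ) (hs : Continuous s) =>
    continuous_parametric_intervalIntegral_of_continuous (a₀ := 0) (μ := volume) hf hs
  refine ((primitive b hb).sub (primitive a ha)).congr fun x => ?_
  exact integral_interval_sub_left ((hf.uncurry_left x).intervalIntegrable _ _)
    ((hf.uncurry_left x).intervalIntegrable _ _)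

theorem hasDerivAt_intervalIntegral_of_continuous_deriv {F F' : ℝ → ℝ → E}
    (hF : Continuous (uncurry F)) (hF' : Continuous (uncurry F'))
    (hderiv : ∀ k y, HasDerivAt (F · y) (F' k y) k) (a b k₀ : ℝ) :
    HasDerivAt (fun k => ∫ y in a..b, F k y) (∫ y in a..b, F' k₀ y) k₀ := by
  obtain ⟨C, hC⟩ := ((isCompact_closedBall k₀ 1).prod isCompact_uIcc).exists_bound_of_continuousOn
    (hF'.continuousOn (s := Metric.closedBall k₀ 1 ×ˢ uIcc a b))
  refine (hasDerivAt_integral_of_dominated_loc_of_deriv_le (bound := fun _ => C)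
    (Metric.closedBall_mem_nhds k₀ one_pos)
    (Eventually.of_forall fun k => (hF.uncurry_left k).aestronglyMeasurable)
    ((hF.uncurry_left k₀).intervalIntegrable _ _)
    (hF'.uncurry_left k₀).aestronglyMeasurable
    (Eventually.of_forall fun y hy k hk => hC (k, y) ⟨hk, uIoc_subset_uIcc hy⟩)
    intervalIntegrable_const
    (Eventually.of_forall fun y _ k _ => hderiv k y)).2

theorem hasDerivAt_intervalIntegral_lipschitz_upper_limit_of_eq_zero {F : ℝ → ℝ → E}
    {u : ℝ → ℝ} {L : ℝ≥0} {k₀ : ℝ} (hF : ContinuousAt (uncurry F) (k₀, u k₀)) (hF₀ : F k₀ (u k₀) = 0)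
    (hu : LipschitzWith L u) :
    HasDerivAt (fun k => ∫ y in u k₀..u k, F k y) 0 k₀ := by
  rw [hasDerivAt_iff_isLittleO, Asymptotics.isLittleO_iff]
  intro c hc
  set ε := c / (L + 1)
  have hL : (0 : ℝ) < L + 1 := by positivity
  have hεL : ε * L ≤ c := by
    rw [div_mul_eq_mul_div, div_le_iff₀ hL]; nlinarith [L.coe_nonneg]
  have hsmall : ∀ᶠ p in 𝓝 (k₀, u k₀), ‖uncurry F p‖ ≤ ε := by
    have := hF.eventually (Metric.closedBall_mem_nhds _ (by positivity : 0 < ε))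
    simpa [uncurry, hF₀] using this
  obtain ⟨δ, hδ, hball⟩ := Metric.eventually_nhds_iff.1 hsmall
  filter_upwards [Metric.ball_mem_nhds k₀ (div_pos hδ hL)] with k hk
  rw [Metric.mem_ball, Real.dist_eq] at hk
  have hu_k : |u k - u k₀| ≤ L * |k - k₀| := by
    simpa [Real.dist_eq] using hu.dist_le_mul k k₀
  have hLk : L * |k - k₀| < δ := by
    calc (L : ℝ) * |k - k₀| ≤ (L + 1) * |k - k₀| := by gcongr; linarith
      _ < (L + 1) * (δ / (L + 1)) := by gcongr
      _ = δ := by field_simp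
  have hbound : ∀ y ∈ uIoc (u k₀) (u k), ‖F k y‖ ≤ ε := fun y hy => by
    refine hball (y := (k, y)) ?_
    have hy' : |y - u k₀| ≤ |u k - u k₀| := abs_sub_left_of_mem_uIcc (uIoc_subset_uIcc hy)
    rw [Prod.dist_eq, max_lt_iff, Real.dist_eq, Real.dist_eq]
    exact ⟨hk.trans_le (div_le_self hδ.le (by simp)), by linarith⟩
  simp only [integral_same, sub_zero, smul_zero, Real.norm_eq_abs]
  calc ‖∫ y in u k₀..u k, F k y‖ ≤ ε * |u k - u k₀| := norm_integral_le_of_norm_le_const hbound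
    _ ≤ ε * (L * |k - k₀|) := by gcongr
    _ ≤ c * |k - k₀| := by rw [← mul_assoc]; gcongr

end Parametric

noncomputable def callPayoffIntegral (ψ : ℝ → ℝ → ℝ) (k y : ℝ) : ℝ := ∫ x in k..y, (x - k) * ψ x y

section CallPayoffIntegral

variable {ψ : ℝ → ℝ → ℝ} (hψ : Continuous (uncurry ψ))
include hψ

theorem continuous_callPayoffIntegral : Continuous (uncurry (callPayoffIntegral ψ)) :=
  continuous_intervalIntegral_of_continuous_uncurry
    (f := fun (p : ℝ × ℝ) x => (x - p.1) * ψ x p.2)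
    ((continuous_snd.sub continuous_fst.fst).mul
      (hψ.comp (continuous_snd.prodMk continuous_fst.snd))) continuous_fst continuous_snd

theorem continuous_intervalIntegral_uncurry :
    Continuous (uncurry fun k y => ∫ x in k..y, ψ x y) :=
  continuous_intervalIntegral_of_continuous_uncurry (f := fun (p : ℝ × ℝ) x => ψ x p.2)
    (hψ.comp (continuous_snd.prodMk continuous_fst.snd)) continuous_fst continuous_snd

theorem hasDerivAt_callPayoffIntegral (k y : ℝ) :
    HasDerivAt (callPayoffIntegral ψ · y) (-∫ x in k..y, ψ x y) k := by
  have hψy : Continuous (ψ · y) := hψ.comp (continuous_id.prodMk continuous_const)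
  have hxψy : Continuous fun x => x * ψ x y := continuous_id.mul hψy
  have expand : (callPayoffIntegral ψ · y)
      = fun k => (∫ x in k..y, x * ψ x y) - k * ∫ x in k..y, ψ x y := by
    funext k
    rw [← intervalIntegral.integral_const_mul, ← intervalIntegral.integral_sub
      (f := fun x => x * ψ x y) (g := fun x => k * ψ x y) (hxψy.intervalIntegrable _ _)
      ((continuous_const.mul hψy).intervalIntegrable _ _)]
    simp only [callPayoffIntegral, sub_mul]
  have first := integral_hasDerivAt_left (hxψy.intervalIntegrable k y)
    (hxψy.stronglyMeasurableAtFilter _ _) hxψy.continuousAt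
  have second := integral_hasDerivAt_left (hψy.intervalIntegrable k y)
    (hψy.stronglyMeasurableAtFilter _ _) hψy.continuousAt
  rw [expand]
  exact (first.fun_sub ((hasDerivAt_id' k).fun_mul second)).congr_deriv (by ring)

theorem hasDerivAt_intervalIntegral_max_callPayoffIntegral (c b k : ℝ) :
    HasDerivAt (fun k' => ∫ y in max k' c..b, callPayoffIntegral ψ k' y)
      (∫ y in max k c..b, -∫ x in k..y, ψ x y) k := by
  have hG := continuous_callPayoffIntegral hψ
  have leibniz := hasDerivAt_intervalIntegral_of_continuous_deriv hG
    (F' := fun k y => -∫ x in k..y, ψ x y) (continuous_intervalIntegral_uncurry hψ).neg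
    (hasDerivAt_callPayoffIntegral hψ)
  rcases lt_or_ge k c with hkc | hck
  · rw [max_eq_right hkc.le]
    refine (leibniz c b k).congr_of_eventuallyEq ?_
    filter_upwards [Iio_mem_nhds hkc] with k' hk'
    rw [max_eq_right hk'.le]
  · have boundary := hasDerivAt_intervalIntegral_lipschitz_upper_limit_of_eq_zero (k₀ := k)
      (u := fun k' => max k' c) hG.continuousAt (by simp [callPayoffIntegral, max_eq_left hck])
      (LipschitzWith.id.max_const c)
    have split : (fun k' => ∫ y in max k' c..b, callPayoffIntegral ψ k' y) = fun k' =>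
        (∫ y in k..b, callPayoffIntegral ψ k' y) - ∫ y in k..max k' c, callPayoffIntegral ψ k' y :=
      funext fun k' => (integral_interval_sub_left ((hG.uncurry_left k').intervalIntegrable _ _)
        ((hG.uncurry_left k').intervalIntegrable _ _)).symm
    rw [max_eq_left hck] at boundary
    rw [split, max_eq_left hck]
    simpa using (leibniz k b k).fun_sub boundary

end CallPayoffIntegral

theorem stmt_1_general (S₀ : ℝ) (r : ℝ → ℝ)
    (φ : ℝ → ℝ → ℝ → ℝ)
    (hφcont : ∀ t : ℝ, Continuous fun p : ℝ × ℝ => φ p.1 p.2 t) :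
    ∀ K B T : ℝ, 0 < K → K < B → S₀ < B → 0 ≤ T →
      deriv (fun B' => deriv (fun K' => upOutCall S₀ r φ K' B' T) K) B
        = -(disc r T) * ∫ x in K..B, φ x B T := by
  intro K B T _ _ _ _
  have hψ : Continuous (uncurry fun x y => φ x y T) := hφcont T
  have inner : (fun B' => deriv (fun K' => upOutCall S₀ r φ K' B' T) K)
      = fun B' => disc r T * ∫ y in max K S₀..B', -∫ x in K..y, φ x y T := funext fun B' =>
    ((hasDerivAt_intervalIntegral_max_callPayoffIntegral hψ S₀ B' K).const_mul (disc r T)).deriv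
  have hΨ : Continuous fun y => -∫ x in K..y, φ x y T :=
    ((continuous_intervalIntegral_uncurry hψ).uncurry_left K).neg
  rw [inner, ((integral_hasDerivAt_right (hΨ.intervalIntegrable _ _)
    (hΨ.stronglyMeasurableAtFilter _ _) hΨ.continuousAt).const_mul (disc r T)).deriv]
  ring

/-- For all `0 < K < B` with `B > S₀` and all `T ≥ 0`,
`∂²C/∂K∂B (K,B,T) = - D(T) ∫_K^B φ(x,B,T) dx`. -/
theorem stmt_1 (S₀ : ℝ) (hS₀ : 0 < S₀) (r : ℝ → ℝ) (hr : Continuous r)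
    (φ : ℝ → ℝ → ℝ → ℝ)
    (hφcont : ∀ t : ℝ, Continuous fun p : ℝ × ℝ => φ p.1 p.2 t)
    (hφbd : ∀ s : Set (ℝ × ℝ × ℝ), IsCompact s → ∃ M : ℝ, ∀ p ∈ s, |φ p.1 p.2.1 p.2.2| ≤ M) :
    ∀ K B T : ℝ, 0 < K → K < B → S₀ < B → 0 ≤ T →
      deriv (fun B' => deriv (fun K' => upOutCall S₀ r φ K' B' T) K) B
        = -(disc r T) * ∫ x in K..B, φ x B T :=
  stmt_1_general S₀ r φ hφcont
end

section
/- Suppose φ satisfies the diagonal boundary condition (DBC) for all B = y > S₀ and t > 0, and that the map (x,y) ↦ σ²(x,y,t) x² φ(x,y,t) is continuously differentiable. Then for every B > S₀ and t > 0: d/dB [ σ²(B,B,t) B² φ(B,B,t) ] = − [ ∂/∂x ( σ²(x,B,t) x² φ(x,B,t) ) ]_{x=B} + 2 μ(t) B φ(B,B,t). -/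
theorem deriv_comp_diag_eq_add {𝕜 F : Type*} [NontriviallyNormedField 𝕜] [NormedAddCommGroup F]
    [NormedSpace 𝕜 F] {g : 𝕜 × 𝕜 → F} {a : 𝕜} (hg : DifferentiableAt 𝕜 g (a, a)) :
    deriv (fun b => g (b, b)) a = deriv (fun x => g (x, a)) a + deriv (fun y => g (a, y)) a := by
  have hdiag := hg.hasFDerivAt.comp_hasDerivAt (f := fun b => (b, b)) a
    ((hasDerivAt_id' a).prodMk (hasDerivAt_id' a))
  have hx := hg.hasFDerivAt.comp_hasDerivAt (f := fun x => (x, a)) a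
    ((hasDerivAt_id' a).prodMk (hasDerivAt_const a a))
  have hy := hg.hasFDerivAt.comp_hasDerivAt (f := fun y => (a, y)) a
    ((hasDerivAt_const a a).prodMk (hasDerivAt_id' a))
  rw [Function.comp_def] at hdiag hx hy
  rw [hdiag.deriv, hx.deriv, hy.deriv, ← map_add, Prod.mk_add_mk, add_zero, zero_add]

theorem stmt_3_general (S₀ : ℝ)
    (r q : ℝ → ℝ)
    (σ φ : ℝ → ℝ → ℝ → ℝ)
    (hψ : ∀ t : ℝ, ContDiff ℝ 1 fun p : ℝ × ℝ => (σ p.1 p.2 t)^2 * p.1^2 * φ p.1 p.2 t)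
    -- diagonal boundary condition at x = y > S₀, t > 0
    (hDBC : ∀ y t : ℝ, S₀ < y → 0 < t →
      deriv (fun x' => (σ x' y t)^2 * x'^2 * φ x' y t) y
        + (1/2) * deriv (fun y' => (σ y y' t)^2 * y^2 * φ y y' t) y
        = (r t - q t) * y * φ y y t) :
    ∀ B t : ℝ, S₀ < B → 0 < t →
      deriv (fun b => (σ b b t)^2 * b^2 * φ b b t) B
        = - deriv (fun x => (σ x B t)^2 * x^2 * φ x B t) B
          + 2 * (r t - q t) * B * φ B B t := by
  intro B t hB ht
  have hsplit := deriv_comp_diag_eq_add (((hψ t).differentiable one_ne_zero) (B, B))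
  have hD := hDBC B t hB ht
  dsimp only at hsplit
  linarith

/-- If `φ` satisfies the diagonal boundary condition and `(x,y) ↦ σ²(x,y,t) x² φ(x,y,t)`
is continuously differentiable, then for every `B > S₀`, `t > 0`,
`d/dB [σ²(B,B,t) B² φ(B,B,t)]
  = - [∂/∂x (σ²(x,B,t) x² φ(x,B,t))]_{x=B} + 2 μ(t) B φ(B,B,t)`. -/
theorem stmt_3 (S₀ : ℝ) (hS₀ : 0 < S₀)
    (r q : ℝ → ℝ) (hr : Continuous r) (hq : Continuous q)
    (σ φ : ℝ → ℝ → ℝ → ℝ)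
    (hσx : ∀ y t, ContDiff ℝ 2 fun x => σ x y t)
    (hσy : ∀ x t, ContDiff ℝ 1 fun y => σ x y t)
    (hφ : ContDiff ℝ 2 fun p : ℝ × ℝ × ℝ => φ p.1 p.2.1 p.2.2)
    (hψ : ∀ t : ℝ, ContDiff ℝ 1 fun p : ℝ × ℝ => (σ p.1 p.2 t)^2 * p.1^2 * φ p.1 p.2 t)
    -- diagonal boundary condition at x = y > S₀, t > 0
    (hDBC : ∀ y t : ℝ, S₀ < y → 0 < t →
      deriv (fun x' => (σ x' y t)^2 * x'^2 * φ x' y t) y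
        + (1/2) * deriv (fun y' => (σ y y' t)^2 * y^2 * φ y y' t) y
        = (r t - q t) * y * φ y y t) :
    ∀ B t : ℝ, S₀ < B → 0 < t →
      deriv (fun b => (σ b b t)^2 * b^2 * φ b b t) B
        = - deriv (fun x => (σ x B t)^2 * x^2 * φ x B t) B
          + 2 * (r t - q t) * B * φ B B t :=
  stmt_3_general S₀ r q σ φ hψ hDBC
end
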